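/- arXiv:1107.2716 — 2 statements merged into one kernel-verified Lean document; each statement's English description precedes it below -/
import Mathlib

section
/- Let (Ω, F, P, (F_t)_{t∈[0,T]}) be a filtered probability space satisfying the usual conditions with F_T = F. Let 𝒵 be a nonempty set of strictly positive càdlàg martingales Z with Z_0 = 1 and E[Z_T log Z_T] < ∞, and assume 𝒵 is stable under pasting: for all Z, Ẑ ∈ 𝒵, every stopping time σ with values in [0,T], and every A ∈ F_σ, the process Z̃_t := 1_{{t < σ}} Ẑ_t + 1_{{t ≥ σ}} ( 1_A (Z_t/Z_σ) Ẑ_σ + 1_{A^c} Ẑ_t ), t ∈ [0,T], again belongs to 𝒵. Suppose Ẑ ∈ 𝒵 minimizes the entropy E[Z_T log Z_T] over Z ∈ 𝒵, and suppose some Z ∈ 𝒵 satisfies E[(Z_T/Z_τ) log(Z_T/Z_τ) | F_τ] ≤ K almost surely for every stopping time τ with values in [0,T]. Then Ẑ satisfies E[(Ẑ_T/Ẑ_τ) log(Ẑ_T/Ẑ_τ) | F_τ] ≤ K almost surely for every stopping time τ with values in [0,T]. -/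
/-!
Suppose the conditional entropy of `Ẑ` after `τ` exceeded `K` on an `F_τ`-set `A` of positive
probability, on which we may also assume `log Ẑ_τ` bounded. Pasting the increments `Z_T / Z_τ`
of `Z` onto `Ẑ` at `τ` on an `F_τ`-set `B` gives a density `W` with `W_T = Ẑ_τ Z_T / Z_τ` on `B`
and `W_T = Ẑ_T` off `B`. As `E[W_T] = E[Ẑ_T] = 1` for every such `B`, the variables
`Ẑ_τ Z_T / Z_τ` and `Ẑ_T` have the same conditional mean given `F_τ`. Hence in
`x log x = x log (x / Ẑ_τ) + x log Ẑ_τ` the last terms have equal integrals over `A`, and the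
minimality of `Ẑ` against the pasting on `A` yields
`E[1_A Ẑ_τ (Ẑ_T/Ẑ_τ) log (Ẑ_T/Ẑ_τ)] ≤ E[1_A Ẑ_τ (Z_T/Z_τ) log (Z_T/Z_τ)] ≤ K E[1_A Ẑ_τ]`,
a contradiction. The bound for `Z` is used at the stopping time equal to `τ` on `A` and to `T`
off `A`, for which the entropy of `Z` after it is integrable.
-/

open MeasureTheory Set Filter Topology

/-- The usual conditions for a filtration indexed by `ℝ`: right-continuity and
completeness (all null sets lie in `ℱ 0`). -/
def UsualConditions {Ω : Type*} {m0 : MeasurableSpace Ω} (ℱ : Filtration ℝ m0)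
    (P : Measure Ω) : Prop :=
  (∀ t : ℝ, (ℱ t : MeasurableSpace Ω) = ⨅ s ∈ Ioi t, (ℱ s : MeasurableSpace Ω)) ∧
  (∀ s : Set Ω, P s = 0 → MeasurableSet[ℱ 0] s)

/-- A process is a martingale on the time interval `[0, T]` with respect to the
filtration `ℱ` and measure `μ`. -/
def MartingaleOn {Ω : Type*} {m0 : MeasurableSpace Ω} (ℱ : Filtration ℝ m0)
    (μ : Measure Ω) (T : ℝ) (X : ℝ → Ω → ℝ) : Prop :=
  (∀ t ∈ Icc (0 : ℝ) T, StronglyMeasurable[ℱ t] (X t)) ∧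
  (∀ t ∈ Icc (0 : ℝ) T, Integrable (X t) μ) ∧
  (∀ s t : ℝ, s ∈ Icc (0 : ℝ) T → t ∈ Icc (0 : ℝ) T → s ≤ t →
    μ[X t | ℱ s] =ᵐ[μ] X s)

/-- A real function is càdlàg (right-continuous with left limits) on `[0, T]`. -/
def CadlagOn (T : ℝ) (f : ℝ → ℝ) : Prop :=
  (∀ t ∈ Icc (0 : ℝ) T, ContinuousWithinAt f (Icc t T) t) ∧
  (∀ t ∈ Ioc (0 : ℝ) T, ∃ l : ℝ, Tendsto f (𝓝[Ico 0 t] t) (𝓝 l))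

lemma Real.mul_log_div_eq (x : ℝ) {v : ℝ} (hv : v ≠ 0) :
    x * Real.log (x / v) = x * Real.log x - Real.log v * x := by
  rcases eq_or_ne x 0 with rfl | hx
  · simp
  · rw [Real.log_div hx hv]; ring

lemma Real.abs_le_exp_of_abs_log_le {v C : ℝ} (hv : 0 < v) (h : |Real.log v| ≤ C) :
    |v| ≤ Real.exp C := by
  rw [abs_of_pos hv, ← Real.exp_log hv]
  exact Real.exp_le_exp.2 (le_of_abs_le h)

lemma tendsto_ceil_mul_two_pow_div (s : ℝ) :
    Tendsto (fun n : ℕ => (⌈s * 2 ^ n⌉ : ℝ) / 2 ^ n) atTop (𝓝[≥] s) := by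
  have hle : ∀ n : ℕ, s ≤ (⌈s * 2 ^ n⌉ : ℝ) / 2 ^ n := fun n => by
    rw [le_div_iff₀ (by positivity)]; exact Int.le_ceil _
  have hub : ∀ n : ℕ, (⌈s * 2 ^ n⌉ : ℝ) / 2 ^ n ≤ s + (2 ^ n)⁻¹ := fun n => by
    rw [div_le_iff₀ (by positivity), add_mul, inv_mul_cancel₀ (by positivity)]
    exact (Int.ceil_lt_add_one _).le
  have hlim : Tendsto (fun n : ℕ => s + ((2 : ℝ) ^ n)⁻¹) atTop (𝓝 s) := by
    simpa using (tendsto_const_nhds (x := s)).add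
      (tendsto_inv_atTop_zero.comp (tendsto_pow_atTop_atTop_of_one_lt one_lt_two))
  exact tendsto_nhdsWithin_iff.2
    ⟨tendsto_of_tendsto_of_tendsto_of_le_of_le tendsto_const_nhds hlim hle hub, .of_forall hle⟩

namespace MeasureTheory

section StoppingTimes

open TopologicalSpace

variable {Ω β : Type*} {m0 : MeasurableSpace Ω} {ℱ : Filtration ℝ m0}
  [TopologicalSpace β] [PseudoMetrizableSpace β] [SecondCountableTopology β]
  [MeasurableSpace β] [BorelSpace β]

theorem StronglyAdapted.isStronglyProgressive_of_rightContinuous {u : ℝ → Ω → β}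
    (hu : StronglyAdapted ℱ u) (hcont : ∀ ω t, ContinuousWithinAt (u · ω) (Ici t) t) :
    IsStronglyProgressive ℱ u := by
  intro i
  refine stronglyMeasurable_of_tendsto atTop
    (f := fun n (p : Iic i × Ω) => u (min i ((⌈(p.1 : ℝ) * 2 ^ n⌉ : ℝ) / 2 ^ n)) p.2)
    (fun n => ?_) ?_
  · have hF : Measurable[MeasurableSpace.prod inferInstance (ℱ i)]
        (fun q : ℤ × Ω => u (min i (q.1 / 2 ^ n)) q.2) :=
      measurable_from_prod_countable_right fun k =>
        ((hu (min i (k / 2 ^ n))).mono (ℱ.mono (min_le_left _ _))).measurable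
    have hceil : Measurable[MeasurableSpace.prod inferInstance (ℱ i),
        MeasurableSpace.prod inferInstance (ℱ i)]
        (fun p : Iic i × Ω => (⌈(p.1 : ℝ) * 2 ^ n⌉, p.2)) :=
      (Int.measurable_ceil.comp ((measurable_subtype_coe.comp measurable_fst).mul_const _)).prodMk
        measurable_snd
    exact (hF.comp hceil).stronglyMeasurable
  · refine tendsto_pi_nhds.2 fun p => (hcont p.2 p.1).tendsto.comp ?_
    have hp : (p.1 : ℝ) ≤ i := p.1.2
    have hmin : Tendsto (fun s => min i s) (𝓝[≥] (p.1 : ℝ)) (𝓝[≥] (p.1 : ℝ)) := by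
      refine tendsto_nhdsWithin_iff.2 ⟨?_, ?_⟩
      · simpa [min_eq_right hp] using ((continuous_const (y := i)).min continuous_id).continuousAt
          (x := (p.1 : ℝ)) |>.tendsto.mono_left nhdsWithin_le_nhds
      · exact eventually_nhdsWithin_of_forall fun s hs => le_min hp hs
    exact hmin.comp (tendsto_ceil_mul_two_pow_div _)

theorem stronglyMeasurable_stoppedValue_of_rightContinuousOn [Zero β] {T : ℝ} (hT : 0 ≤ T)
    {u : ℝ → Ω → β} (hu : ∀ t ∈ Icc 0 T, StronglyMeasurable[ℱ t] (u t))
    (hcont : ∀ ω, ∀ t ∈ Icc 0 T, ContinuousWithinAt (u · ω) (Icc t T) t)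
    {τ : Ω → ℝ} (hτ : IsStoppingTime ℱ (fun ω => (τ ω : WithTop ℝ)))
    (hτT : ∀ ω, τ ω ∈ Icc 0 T) :
    StronglyMeasurable[hτ.measurableSpace] (fun ω => u (τ ω) ω) := by
  -- a right-continuous adapted process on all of `ℝ` that agrees with `u` on `[0, T]`
  let v : ℝ → Ω → β := fun t => if t < 0 then 0 else u (min t T)
  have hv : StronglyAdapted ℱ v := by
    intro t
    by_cases ht : t < 0
    · simpa only [v, if_pos ht] using stronglyMeasurable_zero
    · simpa only [v, if_neg ht] using
        (hu _ ⟨le_min (not_lt.1 ht) hT, min_le_right _ _⟩).mono (ℱ.mono (min_le_left _ _))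
  have hvcont : ∀ ω t, ContinuousWithinAt (v · ω) (Ici t) t := by
    intro ω t
    by_cases ht : t < 0
    · refine (continuousAt_const (y := (0 : β))).congr ?_ |>.continuousWithinAt
      filter_upwards [Iio_mem_nhds ht] with s hs
      simp [v, show s < 0 from hs]
    · have hmaps : MapsTo (fun s => min s T) (Ici t) (Icc (min t T) T) :=
        fun s hs => ⟨min_le_min_right T hs, min_le_right _ _⟩
      have hmin : ContinuousWithinAt (fun s => min s T) (Ici t) t :=
        (continuous_id.min continuous_const).continuousWithinAt
      refine (ContinuousWithinAt.comp (x := t)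
        (hcont ω (min t T) ⟨le_min (not_lt.1 ht) hT, min_le_right _ _⟩) hmin hmaps).congr
        (fun s hs => ?_) ?_
      · simp [v, not_lt.2 ((not_lt.1 ht).trans hs)]
      · simp [v, ht]
  have hstop : stoppedValue v (fun ω => (τ ω : WithTop ℝ)) = fun ω => u (τ ω) ω := by
    funext ω
    simp [stoppedValue, v, not_lt.2 (hτT ω).1, min_eq_left (hτT ω).2]
  rw [← hstop]
  exact (measurable_stoppedValue (hv.isStronglyProgressive_of_rightContinuous hvcont)
    hτ).stronglyMeasurable

theorem IsStoppingTime.piecewise_const_of_measurableSet {ι : Type*} [Preorder ι]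
    {f : Filtration ι m0} {τ : Ω → WithTop ι} (hτ : IsStoppingTime f τ) {i : ι}
    (hτi : ∀ ω, τ ω ≤ i) {s : Set Ω} [DecidablePred (· ∈ s)]
    (hs : MeasurableSet[hτ.measurableSpace] s) :
    IsStoppingTime f (s.piecewise τ fun _ => i) := by
  intro n
  have hset : {ω | s.piecewise τ (fun _ => (i : WithTop ι)) ω ≤ n}
      = s ∩ {ω | τ ω ≤ n} ∪ sᶜ ∩ {_ω | (i : WithTop ι) ≤ n} := by
    ext ω
    by_cases hω : ω ∈ s <;> simp [hω]
  rw [hset]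
  refine ((hτ.measurableSet s).1 hs |>.2 n).union ?_
  by_cases hin : i ≤ n
  · simpa [hin] using (f.mono hin _ (hτ.measurableSpace_le_of_le_const hτi s hs)).compl
  · simp [hin]

end StoppingTimes

section Integrals

variable {Ω : Type*} {m m0 : MeasurableSpace Ω} {μ : Measure Ω}
  {s : Set Ω} {f g h : Ω → ℝ} {C : ℝ}

theorem measure_eq_zero_of_setIntegral_nonpos (hs : MeasurableSet s) (hf : IntegrableOn f s μ)
    (hpos : ∀ ω ∈ s, 0 < f ω) (hle : ∫ ω in s, f ω ∂μ ≤ 0) : μ s = 0 := by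
  have hnonneg : 0 ≤ᵐ[μ.restrict s] f :=
    (ae_restrict_iff' hs).2 (.of_forall fun ω hω => (hpos ω hω).le)
  have h0 : ¬ 0 < μ (Function.support f ∩ s) := by
    rw [← setIntegral_pos_iff_support_of_nonneg_ae hnonneg hf]; exact hle.not_gt
  have hsub : s ⊆ Function.support f ∩ s := fun ω hω => ⟨(hpos ω hω).ne', hω⟩
  exact measure_mono_null hsub (nonpos_iff_eq_zero.1 (not_lt.1 h0))

theorem integral_piecewise_sub_integral [DecidablePred (· ∈ s)] (hs : MeasurableSet s)
    (hfg : Integrable (s.piecewise f g) μ) (hg : Integrable g μ) :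
    ∫ ω, s.piecewise f g ω ∂μ - ∫ ω, g ω ∂μ = ∫ ω in s, f ω ∂μ - ∫ ω in s, g ω ∂μ := by
  have hf : IntegrableOn f s μ :=
    hfg.integrableOn.congr_fun (fun ω hω => piecewise_eq_of_mem s f g hω) hs
  rw [integral_piecewise hs hf hg.integrableOn, ← integral_add_compl hs hg]
  ring

theorem integrableOn_mul_log_div {X V : Ω → ℝ} (hs : MeasurableSet s)
    (hV : AEStronglyMeasurable V μ) (hV0 : ∀ ω ∈ s, V ω ≠ 0)
    (hlogV : ∀ ω ∈ s, |Real.log (V ω)| ≤ C)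
    (hX : Integrable X μ) (hXlog : Integrable (fun ω => X ω * Real.log (X ω)) μ) :
    IntegrableOn (fun ω => X ω * Real.log (X ω / V ω)) s μ := by
  have hbd : ∀ᵐ ω ∂μ.restrict s, ‖Real.log (V ω)‖ ≤ C :=
    (ae_restrict_iff' hs).2 (.of_forall hlogV)
  have hlogX : IntegrableOn (fun ω => Real.log (V ω) * X ω) s μ :=
    hX.integrableOn.bdd_mul
      (Real.measurable_log.comp_aemeasurable hV.aemeasurable).aestronglyMeasurable.restrict hbd
  exact (hXlog.integrableOn.sub hlogX).congr_fun
    (fun ω hω => (Real.mul_log_div_eq _ (hV0 ω hω)).symm) hs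

variable [IsFiniteMeasure μ]

theorem setIntegral_mul_condExp (hm : m ≤ m0) (hs : MeasurableSet[m] s)
    (hh : StronglyMeasurable[m] h) (hbd : ∀ ω ∈ s, |h ω| ≤ C) (hf : Integrable f μ) :
    ∫ ω in s, h ω * μ[f|m] ω ∂μ = ∫ ω in s, h ω * f ω ∂μ := by
  have hbd' : ∀ᵐ ω ∂μ, ‖s.indicator h ω‖ ≤ max C 0 := .of_forall fun ω => by
    by_cases hω : ω ∈ s
    · rw [indicator_of_mem hω, Real.norm_eq_abs]; exact le_max_of_le_left (hbd ω hω)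
    · rw [indicator_of_notMem hω, norm_zero]; exact le_max_right _ _
  simp_rw [← integral_indicator (hm s hs), indicator_mul_left]
  calc ∫ ω, s.indicator h ω * μ[f|m] ω ∂μ = ∫ ω, μ[s.indicator h * f|m] ω ∂μ :=
        integral_congr_ae
          (condExp_stronglyMeasurable_mul_of_bound hm (hh.indicator hs) hf _ hbd').symm
    _ = ∫ ω, s.indicator h ω * f ω ∂μ := integral_condExp hm

theorem setIntegral_mul_eq_of_forall_setIntegral_eq (hm : m ≤ m0) (hs : MeasurableSet[m] s)
    (hh : StronglyMeasurable[m] h) (hbd : ∀ ω ∈ s, |h ω| ≤ C) (hf : Integrable f μ)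
    (hg : Integrable g μ) (hfg : ∀ t, MeasurableSet[m] t → ∫ ω in t, f ω ∂μ = ∫ ω in t, g ω ∂μ) :
    ∫ ω in s, h ω * f ω ∂μ = ∫ ω in s, h ω * g ω ∂μ := by
  have hcond : μ[f|m] =ᵐ[μ] μ[g|m] :=
    ae_eq_condExp_of_forall_setIntegral_eq hm hg (fun _ _ _ => integrable_condExp.integrableOn)
      (fun t ht _ => by rw [setIntegral_condExp hm hf ht, hfg t ht])
      stronglyMeasurable_condExp.aestronglyMeasurable
  rw [← setIntegral_mul_condExp hm hs hh hbd hf, ← setIntegral_mul_condExp hm hs hh hbd hg]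
  exact setIntegral_congr_ae (hm s hs) (hcond.mono fun ω hω _ => by rw [hω])

theorem setIntegral_mul_le_of_condExp_le (hm : m ≤ m0) (hs : MeasurableSet[m] s)
    (hh : StronglyMeasurable[m] h) (hh0 : ∀ ω ∈ s, 0 ≤ h ω) (hbd : ∀ ω ∈ s, |h ω| ≤ C)
    (hf : Integrable f μ) {K : ℝ} (hK : ∀ᵐ ω ∂μ, μ[f|m] ω ≤ K) :
    ∫ ω in s, h ω * f ω ∂μ ≤ ∫ ω in s, h ω * K ∂μ := by
  have hbd' : ∀ᵐ ω ∂μ.restrict s, ‖h ω‖ ≤ C := (ae_restrict_iff' (hm s hs)).2 (.of_forall hbd)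
  have hhm : AEStronglyMeasurable h (μ.restrict s) := (hh.mono hm).aestronglyMeasurable
  have hcond : Integrable (μ[f|m]) (μ.restrict s) := integrable_condExp.integrableOn
  rw [← setIntegral_mul_condExp hm hs hh hbd hf]
  refine setIntegral_mono_ae_restrict (hcond.bdd_mul hhm hbd')
    ((integrable_const K).integrableOn.bdd_mul hhm hbd') ?_
  filter_upwards [ae_restrict_of_ae hK, ae_restrict_mem (hm s hs)] with ω hω hωs
  exact mul_le_mul_of_nonneg_left hω (hh0 ω hωs)

theorem setIntegral_mul_log_div_le (hm : m ≤ m0) (hs : MeasurableSet[m] s) {X Y V : Ω → ℝ}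
    (hV : StronglyMeasurable[m] V) (hV0 : ∀ ω ∈ s, V ω ≠ 0)
    (hlogV : ∀ ω ∈ s, |Real.log (V ω)| ≤ C)
    (hX : Integrable X μ) (hXlog : Integrable (fun ω => X ω * Real.log (X ω)) μ)
    (hY : Integrable Y μ) (hYlog : Integrable (fun ω => Y ω * Real.log (Y ω)) μ)
    (hmean : ∀ t, MeasurableSet[m] t → ∫ ω in t, X ω ∂μ = ∫ ω in t, Y ω ∂μ)
    (hmin : ∫ ω in s, X ω * Real.log (X ω) ∂μ ≤ ∫ ω in s, Y ω * Real.log (Y ω) ∂μ) :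
    ∫ ω in s, X ω * Real.log (X ω / V ω) ∂μ ≤ ∫ ω in s, Y ω * Real.log (Y ω / V ω) ∂μ := by
  have hlog : StronglyMeasurable[m] fun ω => Real.log (V ω) :=
    (Real.measurable_log.comp hV.measurable).stronglyMeasurable
  have hsplit : ∀ W : Ω → ℝ, Integrable W μ → Integrable (fun ω => W ω * Real.log (W ω)) μ →
      ∫ ω in s, W ω * Real.log (W ω / V ω) ∂μ
        = ∫ ω in s, W ω * Real.log (W ω) ∂μ - ∫ ω in s, Real.log (V ω) * W ω ∂μ := by
    intro W hW hWlog
    have hbd : ∀ᵐ ω ∂μ.restrict s, ‖Real.log (V ω)‖ ≤ C :=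
      (ae_restrict_iff' (hm s hs)).2 (.of_forall hlogV)
    rw [← integral_sub hWlog.integrableOn
      (hW.integrableOn.bdd_mul (hlog.mono hm).aestronglyMeasurable hbd)]
    exact setIntegral_congr_fun (hm s hs) fun ω hω => Real.mul_log_div_eq _ (hV0 ω hω)
  rw [hsplit X hX hXlog, hsplit Y hY hYlog,
    setIntegral_mul_eq_of_forall_setIntegral_eq hm hs hlog hlogV hX hY hmean]
  linarith

theorem setIntegral_mul_condExp_mul_log_div_le (hm : m ≤ m0) (hs : MeasurableSet[m] s)
    {X R V : Ω → ℝ} {K : ℝ} (hV : StronglyMeasurable[m] V) (hVpos : ∀ ω, 0 < V ω)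
    (hlogV : ∀ ω ∈ s, |Real.log (V ω)| ≤ C)
    (hX : Integrable X μ) (hXlog : Integrable (fun ω => X ω * Real.log (X ω)) μ)
    (hY : Integrable (fun ω => R ω * V ω) μ)
    (hYlog : Integrable (fun ω => R ω * V ω * Real.log (R ω * V ω)) μ)
    (hXX : Integrable (fun ω => X ω / V ω * Real.log (X ω / V ω)) μ)
    (hmean : ∀ t, MeasurableSet[m] t → ∫ ω in t, X ω ∂μ = ∫ ω in t, R ω * V ω ∂μ)
    (hmin : ∫ ω in s, X ω * Real.log (X ω) ∂μ ≤ ∫ ω in s, R ω * V ω * Real.log (R ω * V ω) ∂μ)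
    (hK : ∀ᵐ ω ∂μ, μ[s.indicator (fun ω => R ω * Real.log (R ω)) | m] ω ≤ K) :
    ∫ ω in s, V ω * μ[fun ω => X ω / V ω * Real.log (X ω / V ω) | m] ω ∂μ
      ≤ ∫ ω in s, V ω * K ∂μ := by
  have hV0 : ∀ ω, V ω ≠ 0 := fun ω => (hVpos ω).ne'
  have hVbd : ∀ ω ∈ s, |V ω| ≤ Real.exp C := fun ω hω =>
    Real.abs_le_exp_of_abs_log_le (hVpos ω) (hlogV ω hω)
  have hVinvbd : ∀ ω ∈ s, ‖(V ω)⁻¹‖ ≤ Real.exp C := fun ω hω =>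
    Real.abs_le_exp_of_abs_log_le (inv_pos.2 (hVpos ω))
      (by rw [Real.log_inv, abs_neg]; exact hlogV ω hω)
  have hR : Integrable (s.indicator fun ω => R ω * Real.log (R ω)) μ := by
    refine (integrable_indicator_iff (hm s hs)).2 ?_
    have hYs := integrableOn_mul_log_div (hm s hs) (hV.mono hm).aestronglyMeasurable
      (fun ω _ => hV0 ω) hlogV hY hYlog
    have hVinv : AEStronglyMeasurable V⁻¹ (μ.restrict s) :=
      (hV.measurable.inv.mono hm le_rfl).aestronglyMeasurable
    refine IntegrableOn.congr_fun (hYs.bdd_mul hVinv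
      ((ae_restrict_iff' (hm s hs)).2 (.of_forall hVinvbd))) (fun ω _ => ?_) (hm s hs)
    simp only [Pi.inv_apply, mul_div_cancel_right₀ _ (hV0 ω)]
    rw [mul_comm (R ω) (V ω), mul_assoc, inv_mul_cancel_left₀ (hV0 ω)]
  calc ∫ ω in s, V ω * μ[fun ω => X ω / V ω * Real.log (X ω / V ω) | m] ω ∂μ
      = ∫ ω in s, X ω * Real.log (X ω / V ω) ∂μ := by
        rw [setIntegral_mul_condExp hm hs hV hVbd hXX]
        refine setIntegral_congr_fun (hm s hs) fun ω _ => ?_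
        simp only [← mul_assoc, mul_div_cancel₀ _ (hV0 ω)]
    _ ≤ ∫ ω in s, R ω * V ω * Real.log (R ω * V ω / V ω) ∂μ :=
        setIntegral_mul_log_div_le hm hs hV (fun ω _ => hV0 ω) hlogV hX hXlog hY hYlog hmean hmin
    _ = ∫ ω in s, V ω * s.indicator (fun ω => R ω * Real.log (R ω)) ω ∂μ := by
        refine setIntegral_congr_fun (hm s hs) fun ω hω => ?_
        simp only [indicator_of_mem hω, mul_div_cancel_right₀ _ (hV0 ω)]
        ring
    _ ≤ ∫ ω in s, V ω * K ∂μ :=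
        setIntegral_mul_le_of_condExp_le hm hs hV (fun ω _ => (hVpos ω).le) hVbd hR hK

theorem ae_condExp_mul_log_div_le (hm : m ≤ m0) {X R V : Ω → ℝ} {K : ℝ}
    (hV : StronglyMeasurable[m] V) (hVpos : ∀ ω, 0 < V ω)
    (hX : Integrable X μ) (hXlog : Integrable (fun ω => X ω * Real.log (X ω)) μ)
    (hY : Integrable (fun ω => R ω * V ω) μ)
    (hYlog : Integrable (fun ω => R ω * V ω * Real.log (R ω * V ω)) μ)
    (hmean : ∀ s, MeasurableSet[m] s → ∫ ω in s, X ω ∂μ = ∫ ω in s, R ω * V ω ∂μ)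
    (hmin : ∀ s, MeasurableSet[m] s →
      ∫ ω in s, X ω * Real.log (X ω) ∂μ ≤ ∫ ω in s, R ω * V ω * Real.log (R ω * V ω) ∂μ)
    (hK : ∀ s, MeasurableSet[m] s →
      ∀ᵐ ω ∂μ, μ[s.indicator (fun ω => R ω * Real.log (R ω)) | m] ω ≤ K) :
    ∀ᵐ ω ∂μ, μ[fun ω => X ω / V ω * Real.log (X ω / V ω) | m] ω ≤ K := by
  set G := μ[fun ω => X ω / V ω * Real.log (X ω / V ω) | m]
  by_cases hXX : Integrable (fun ω => X ω / V ω * Real.log (X ω / V ω)) μ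
  swap
  · simpa [G, condExp_of_not_integrable hXX] using hK ∅ (@MeasurableSet.empty _ m)
  suffices hnull : ∀ n : ℕ, μ ({ω | K < G ω} ∩ {ω | |Real.log (V ω)| ≤ n}) = 0 by
    refine ae_iff.2 (measure_mono_null (fun ω hω => ?_) (measure_iUnion_null hnull))
    obtain ⟨n, hn⟩ := exists_nat_ge |Real.log (V ω)|
    exact mem_iUnion.2 ⟨n, not_le.1 hω, hn⟩
  intro n
  set s := {ω | K < G ω} ∩ {ω | |Real.log (V ω)| ≤ n}
  have hs : MeasurableSet[m] s :=
    (measurableSet_lt measurable_const stronglyMeasurable_condExp.measurable).inter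
      (measurableSet_le (continuous_abs.measurable.comp
        (Real.measurable_log.comp hV.measurable)) measurable_const)
  have hVbd : ∀ᵐ ω ∂μ.restrict s, ‖V ω‖ ≤ Real.exp n :=
    (ae_restrict_iff' (hm s hs)).2
      (.of_forall fun ω hω => Real.abs_le_exp_of_abs_log_le (hVpos ω) hω.2)
  have hVm : AEStronglyMeasurable V (μ.restrict s) := (hV.mono hm).aestronglyMeasurable
  have hG : Integrable G (μ.restrict s) := integrable_condExp.integrableOn
  have hVG : IntegrableOn (fun ω => V ω * G ω) s μ := hG.bdd_mul hVm hVbd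
  have hVK : IntegrableOn (fun ω => V ω * K) s μ :=
    (integrable_const K).integrableOn.bdd_mul hVm hVbd
  refine measure_eq_zero_of_setIntegral_nonpos (f := fun ω => V ω * G ω - V ω * K) (hm s hs)
    (hVG.sub hVK) (fun ω hω => sub_pos.2 (mul_lt_mul_of_pos_left hω.1 (hVpos ω))) ?_
  rw [integral_sub hVG hVK, sub_nonpos]
  exact setIntegral_mul_condExp_mul_log_div_le hm hs hV hVpos (fun ω hω => hω.2) hX hXlog hY hYlog
    hXX hmean (hmin s hs) (hK s hs)

end Integrals

end MeasureTheory

section DensityProcesses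

variable {Ω : Type*} {m0 : MeasurableSpace Ω} {P : Measure Ω} {ℱ : Filtration ℝ m0} {T : ℝ}

def IsDensityProcess (ℱ : Filtration ℝ m0) (P : Measure Ω) (T : ℝ) (Z : ℝ → Ω → ℝ) : Prop :=
  (∀ t ∈ Icc (0 : ℝ) T, ∀ ω, 0 < Z t ω) ∧
  (∀ ω, CadlagOn T (fun t => Z t ω)) ∧
  MartingaleOn ℱ P T Z ∧
  (∀ᵐ ω ∂P, Z 0 ω = 1) ∧
  Integrable (fun ω => Z T ω * Real.log (Z T ω)) P

theorem IsDensityProcess.integral_eq_one [IsProbabilityMeasure P] {Z : ℝ → Ω → ℝ}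
    (hZ : IsDensityProcess ℱ P T Z) (hT : 0 ≤ T) : ∫ ω, Z T ω ∂P = 1 := by
  obtain ⟨-, -, ⟨-, -, hmart⟩, hZ0, -⟩ := hZ
  calc ∫ ω, Z T ω ∂P = ∫ ω, P[Z T|ℱ 0] ω ∂P := (integral_condExp (ℱ.le 0)).symm
    _ = ∫ ω, (1 : ℝ) ∂P :=
      integral_congr_ae ((hmart 0 T ⟨le_rfl, hT⟩ ⟨hT, le_rfl⟩ hT).trans hZ0)
    _ = 1 := by simp

noncomputable def paste (Z Zh : ℝ → Ω → ℝ) (σ : Ω → ℝ) (A : Set Ω) : ℝ → Ω → ℝ := fun t ω =>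
  if t < σ ω then Zh t ω
  else A.indicator (fun ω' => Z t ω' / Z (σ ω') ω' * Zh (σ ω') ω') ω
    + Aᶜ.indicator (fun ω' => Zh t ω') ω

theorem paste_apply_of_le {Z Zh : ℝ → Ω → ℝ} {σ : Ω → ℝ} (hσT : ∀ ω, σ ω ≤ T) (A : Set Ω)
    [DecidablePred (· ∈ A)] :
    paste Z Zh σ A T = A.piecewise (fun ω => Z T ω / Z (σ ω) ω * Zh (σ ω) ω) (Zh T) := by
  funext ω
  simp only [paste, if_neg (not_lt.2 (hσT ω))]
  exact congrFun (indicator_add_compl_eq_piecewise _ _) ω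

theorem integral_comp_paste_sub (φ : ℝ → ℝ) {Z Zh : ℝ → Ω → ℝ} {σ : Ω → ℝ}
    (hσT : ∀ ω, σ ω ≤ T) {A : Set Ω} (hA : MeasurableSet A)
    (hW : Integrable (fun ω => φ (paste Z Zh σ A T ω)) P)
    (hZh : Integrable (fun ω => φ (Zh T ω)) P) :
    ∫ ω, φ (paste Z Zh σ A T ω) ∂P - ∫ ω, φ (Zh T ω) ∂P
      = ∫ ω in A, φ (Z T ω / Z (σ ω) ω * Zh (σ ω) ω) ∂P - ∫ ω in A, φ (Zh T ω) ∂P := by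
  classical
  simp only [paste_apply_of_le hσT, ← piecewise_op (h := fun _ => φ)] at hW ⊢
  exact integral_piecewise_sub_integral hA hW hZh

theorem IsDensityProcess.setIntegral_paste_eq [IsProbabilityMeasure P] {Z Zh : ℝ → Ω → ℝ}
    {σ : Ω → ℝ} (hT : 0 ≤ T) (hσT : ∀ ω, σ ω ≤ T) {A : Set Ω} (hA : MeasurableSet A)
    (hZh : IsDensityProcess ℱ P T Zh) (hW : IsDensityProcess ℱ P T (paste Z Zh σ A)) :
    ∫ ω in A, Zh T ω ∂P = ∫ ω in A, Z T ω / Z (σ ω) ω * Zh (σ ω) ω ∂P := by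
  have ⟨_, _, ⟨_, hWint, _⟩, _, _⟩ := hW
  have ⟨_, _, ⟨_, hZhint, _⟩, _, _⟩ := hZh
  have h := integral_comp_paste_sub id hσT hA (hWint T ⟨hT, le_rfl⟩) (hZhint T ⟨hT, le_rfl⟩)
  simp only [id, hW.integral_eq_one hT, hZh.integral_eq_one hT] at h
  linarith

theorem ae_condExp_indicator_mul_log_le [IsFiniteMeasure P] {Z : ℝ → Ω → ℝ} {K : ℝ}
    {τ : Ω → ℝ} (hτ : IsStoppingTime ℱ (fun ω => (τ ω : WithTop ℝ)))
    (hτT : ∀ ω, τ ω ∈ Icc 0 T) {s : Set Ω} (hs : MeasurableSet[hτ.measurableSpace] s)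
    (hK : ∀ (τ : Ω → ℝ) (hτ : IsStoppingTime ℱ (fun ω => (τ ω : WithTop ℝ))),
      (∀ ω, τ ω ∈ Icc (0 : ℝ) T) →
      ∀ᵐ ω ∂P, (P[fun ω' => (Z T ω' / Z (τ ω') ω') * Real.log (Z T ω' / Z (τ ω') ω')
          | hτ.measurableSpace]) ω ≤ K) :
    ∀ᵐ ω ∂P, P[s.indicator (fun ω => Z T ω / Z (τ ω) ω * Real.log (Z T ω / Z (τ ω) ω))
      | hτ.measurableSpace] ω ≤ K := by
  classical
  set τ' := s.piecewise τ fun _ => T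
  have hτ' : IsStoppingTime ℱ (fun ω => (τ' ω : WithTop ℝ)) := by
    convert hτ.piecewise_const_of_measurableSet (fun ω => WithTop.coe_le_coe.2 (hτT ω).2) hs
      using 1
    funext ω
    by_cases hω : ω ∈ s <;> simp [τ', hω]
  have hττ' : ∀ ω, τ ω ≤ τ' ω := fun ω => by by_cases hω : ω ∈ s <;> simp [τ', hω, (hτT ω).2]
  have hτ'T : ∀ ω, τ' ω ∈ Icc 0 T := fun ω =>
    ⟨(hτT ω).1.trans (hττ' ω), by by_cases hω : ω ∈ s <;> simp [τ', hω, (hτT ω).2]⟩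
  have hentropy : s.indicator (fun ω => Z T ω / Z (τ ω) ω * Real.log (Z T ω / Z (τ ω) ω))
      = fun ω => Z T ω / Z (τ' ω) ω * Real.log (Z T ω / Z (τ' ω) ω) := by
    funext ω
    by_cases hω : ω ∈ s
    · simp [τ', hω]
    · rcases eq_or_ne (Z T ω) 0 with h0 | h0 <;> simp [τ', hω, h0]
  have hle : hτ.measurableSpace ≤ hτ'.measurableSpace :=
    hτ.measurableSpace_mono hτ' fun ω => WithTop.coe_le_coe.2 (hττ' ω)
  have hm' : hτ'.measurableSpace ≤ m0 :=
    hτ'.measurableSpace_le_of_le fun ω => WithTop.coe_le_coe.2 (hτ'T ω).2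
  rw [hentropy]
  filter_upwards [(condExp_condExp_of_le hle hm').symm.trans_le
    (condExp_mono integrable_condExp (integrable_const K) (hK τ' hτ' hτ'T))] with ω hω
  rwa [condExp_const (hle.trans hm')] at hω

end DensityProcesses

theorem minimal_entropy_RLLogL_general
    {Ω : Type*} {m0 : MeasurableSpace Ω} (P : Measure Ω) [IsProbabilityMeasure P]
    (ℱ : Filtration ℝ m0) (T : ℝ)
    (𝒵 : Set (ℝ → Ω → ℝ))
    (hmem : ∀ Z ∈ 𝒵,
      (∀ t ∈ Icc (0 : ℝ) T, ∀ ω, 0 < Z t ω) ∧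
      (∀ ω, CadlagOn T (fun t => Z t ω)) ∧
      MartingaleOn ℱ P T Z ∧
      (∀ᵐ ω ∂P, Z 0 ω = 1) ∧
      Integrable (fun ω => Z T ω * Real.log (Z T ω)) P)
    (hpaste : ∀ Z ∈ 𝒵, ∀ Zh ∈ 𝒵, ∀ (σ : Ω → ℝ) (hσ : IsStoppingTime ℱ (fun ω => (σ ω : WithTop ℝ))),
      (∀ ω, σ ω ∈ Icc (0 : ℝ) T) →
      ∀ A : Set Ω, MeasurableSet[hσ.measurableSpace] A →
      (fun (t : ℝ) (ω : Ω) =>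
        if t < σ ω then Zh t ω
        else A.indicator (fun ω' => Z t ω' / Z (σ ω') ω' * Zh (σ ω') ω') ω
          + Aᶜ.indicator (fun ω' => Zh t ω') ω) ∈ 𝒵)
    (Zhat : ℝ → Ω → ℝ) (hZhat : Zhat ∈ 𝒵)
    (hmin : ∀ Z ∈ 𝒵,
      ∫ ω, Zhat T ω * Real.log (Zhat T ω) ∂P ≤ ∫ ω, Z T ω * Real.log (Z T ω) ∂P)
    (Z : ℝ → Ω → ℝ) (hZ : Z ∈ 𝒵) (K : ℝ)
    (hK : ∀ (τ : Ω → ℝ) (hτ : IsStoppingTime ℱ (fun ω => (τ ω : WithTop ℝ))), (∀ ω, τ ω ∈ Icc (0 : ℝ) T) →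
      ∀ᵐ ω ∂P,
        (P[fun ω' => (Z T ω' / Z (τ ω') ω') * Real.log (Z T ω' / Z (τ ω') ω')
          | hτ.measurableSpace]) ω ≤ K) :
    ∀ (τ : Ω → ℝ) (hτ : IsStoppingTime ℱ (fun ω => (τ ω : WithTop ℝ))), (∀ ω, τ ω ∈ Icc (0 : ℝ) T) →
      ∀ᵐ ω ∂P,
        (P[fun ω' => (Zhat T ω' / Zhat (τ ω') ω') * Real.log (Zhat T ω' / Zhat (τ ω') ω')
          | hτ.measurableSpace]) ω ≤ K := by
  classical
  intro τ hτ hτT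
  have hT0 : 0 ≤ T := by
    obtain ⟨ω⟩ := nonempty_of_isProbabilityMeasure P
    exact (hτT ω).1.trans (hτT ω).2
  have hTT : T ∈ Icc 0 T := ⟨hT0, le_rfl⟩
  have hτle : ∀ ω, τ ω ≤ T := fun ω => (hτT ω).2
  have hm : hτ.measurableSpace ≤ m0 :=
    hτ.measurableSpace_le_of_le fun ω => WithTop.coe_le_coe.2 (hτle ω)
  obtain ⟨hHpos, hHcad, hHmart, -, hHlog⟩ := hmem Zhat hZhat
  have hW : ∀ s, MeasurableSet[hτ.measurableSpace] s → paste Z Zhat τ s ∈ 𝒵 :=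
    hpaste Z hZ Zhat hZhat τ hτ hτT
  obtain ⟨-, -, ⟨-, hY, -⟩, -, hYlog⟩ := hmem _ (hW univ MeasurableSet.univ)
  replace hY := hY T hTT
  simp only [paste_apply_of_le hτle, piecewise_univ] at hY hYlog
  refine ae_condExp_mul_log_div_le hm (R := fun ω => Z T ω / Z (τ ω) ω)
    (stronglyMeasurable_stoppedValue_of_rightContinuousOn hT0 hHmart.1 (fun ω => (hHcad ω).1)
      hτ hτT)
    (fun ω => hHpos _ (hτT ω) ω) (hHmart.2.1 T hTT) hHlog hY hYlog
    (fun s hs => ?_) (fun s hs => ?_) (fun s hs => ae_condExp_indicator_mul_log_le hτ hτT hs hK)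
  · exact IsDensityProcess.setIntegral_paste_eq hT0 hτle (hm s hs) (hmem _ hZhat) (hmem _ (hW s hs))
  · obtain ⟨-, -, -, -, hWlog⟩ := hmem _ (hW s hs)
    have h := integral_comp_paste_sub (fun x => x * Real.log x) hτle (hm s hs) hWlog hHlog
    linarith [hmin _ (hW s hs)]

/-- the minimal entropy element of a pasting-stable family of densities
inherits the conditional `L log L` bound of any element of the family. -/
theorem minimal_entropy_RLLogL
    {Ω : Type*} {m0 : MeasurableSpace Ω} (P : Measure Ω) [IsProbabilityMeasure P]
    (ℱ : Filtration ℝ m0) (T : ℝ) (hT : 0 < T)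
    (husual : UsualConditions ℱ P) (hFT : (ℱ T : MeasurableSpace Ω) = m0)
    (𝒵 : Set (ℝ → Ω → ℝ)) (hne : 𝒵.Nonempty)
    (hmem : ∀ Z ∈ 𝒵,
      (∀ t ∈ Icc (0 : ℝ) T, ∀ ω, 0 < Z t ω) ∧
      (∀ ω, CadlagOn T (fun t => Z t ω)) ∧
      MartingaleOn ℱ P T Z ∧
      (∀ᵐ ω ∂P, Z 0 ω = 1) ∧
      Integrable (fun ω => Z T ω * Real.log (Z T ω)) P)
    (hpaste : ∀ Z ∈ 𝒵, ∀ Zh ∈ 𝒵, ∀ (σ : Ω → ℝ) (hσ : IsStoppingTime ℱ (fun ω => (σ ω : WithTop ℝ))),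
      (∀ ω, σ ω ∈ Icc (0 : ℝ) T) →
      ∀ A : Set Ω, MeasurableSet[hσ.measurableSpace] A →
      (fun (t : ℝ) (ω : Ω) =>
        if t < σ ω then Zh t ω
        else A.indicator (fun ω' => Z t ω' / Z (σ ω') ω' * Zh (σ ω') ω') ω
          + Aᶜ.indicator (fun ω' => Zh t ω') ω) ∈ 𝒵)
    (Zhat : ℝ → Ω → ℝ) (hZhat : Zhat ∈ 𝒵)
    (hmin : ∀ Z ∈ 𝒵,
      ∫ ω, Zhat T ω * Real.log (Zhat T ω) ∂P ≤ ∫ ω, Z T ω * Real.log (Z T ω) ∂P)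
    (Z : ℝ → Ω → ℝ) (hZ : Z ∈ 𝒵) (K : ℝ)
    (hK : ∀ (τ : Ω → ℝ) (hτ : IsStoppingTime ℱ (fun ω => (τ ω : WithTop ℝ))), (∀ ω, τ ω ∈ Icc (0 : ℝ) T) →
      ∀ᵐ ω ∂P,
        (P[fun ω' => (Z T ω' / Z (τ ω') ω') * Real.log (Z T ω' / Z (τ ω') ω')
          | hτ.measurableSpace]) ω ≤ K) :
    ∀ (τ : Ω → ℝ) (hτ : IsStoppingTime ℱ (fun ω => (τ ω : WithTop ℝ))), (∀ ω, τ ω ∈ Icc (0 : ℝ) T) →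
      ∀ᵐ ω ∂P,
        (P[fun ω' => (Zhat T ω' / Zhat (τ ω') ω') * Real.log (Zhat T ω' / Zhat (τ ω') ω')
          | hτ.measurableSpace]) ω ≤ K :=
  minimal_entropy_RLLogL_general P ℱ T 𝒵 hmem hpaste Zhat hZhat hmin Z hZ K hK
end

section
/- Let Y be a nonnegative random variable on a probability space with E[Y] ≤ 1. Let C ≥ 1, δ ∈ (0,1] and p > 1 be constants such that for every λ > 1, E[ Y·1_{{Y > λ}} ] ≤ (2Cp/(2p−1))·λ·P( Y ≥ δλ/C ). If θ := (2C(p−1)/(2p−1))·(C/δ)^p < 1, then E[ Y^p·1_{{Y > 1}} ] ≤ 2/(1−θ), and consequently E[Y^p] ≤ 1 + 2/(1−θ). -/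
open MeasureTheory Set Filter Topology

open scoped ENNReal

/-!
Multiplying the good-λ inequality by `(p - 1) λ ^ (p - 2)` and integrating over `λ > 1`, Tonelli
turns the left side into `E[(Y ^ p - Y)⁺]` and the layer-cake formula turns the right side into
at most `θ E[Y ^ p]`. Hence `E[Y ^ p] ≤ E[Y] + θ E[Y ^ p] ≤ 1 + θ E[Y ^ p]`, which can be solved for
`E[Y ^ p]` once it is finite. Finiteness is arranged by truncating `Y` at level `n`: as
`δ / C ≤ 1`, the truncations still satisfy the good-λ inequality, and monotone convergence removes
the truncation.
-/

theorem lintegral_Ioo_one_ofReal_mul_rpow {p y : ℝ} (hp : 1 < p) (hy : 0 ≤ y) :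
    ∫⁻ l in Ioo 1 y, ENNReal.ofReal ((p - 1) * l ^ (p - 2)) = ENNReal.ofReal (y ^ (p - 1) - 1) := by
  rcases le_or_gt y 1 with hy1 | hy1
  · rw [Ioo_eq_empty (by linarith), Measure.restrict_empty, lintegral_zero_measure, eq_comm,
      ENNReal.ofReal_eq_zero, sub_nonpos]
    exact Real.rpow_le_one hy hy1 (by linarith)
  have hint : IntegrableOn (fun l => (p - 1) * l ^ (p - 2)) (Ioo 1 y) :=
    ((intervalIntegral.intervalIntegrable_rpow' (by linarith)).1.mono_set
      Ioo_subset_Ioc_self).const_mul _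
  have hnonneg : 0 ≤ᵐ[volume.restrict (Ioo 1 y)] fun l => (p - 1) * l ^ (p - 2) := by
    filter_upwards [self_mem_ae_restrict measurableSet_Ioo] with l hl
    exact mul_nonneg (by linarith) (Real.rpow_nonneg (by linarith [hl.1]) _)
  rw [← ofReal_integral_eq_lintegral_ofReal hint hnonneg, integral_const_mul,
    ← integral_Ioc_eq_integral_Ioo, ← intervalIntegral.integral_of_le hy1.le,
    integral_rpow (Or.inl (by linarith)), show p - 2 + 1 = p - 1 by ring, Real.one_rpow]
  congr 1
  field_simp [show p - 1 ≠ 0 by linarith]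

theorem le_div_one_sub_of_le_add_mul {x a t : ℝ≥0∞} (hx : x ≠ ∞) (ht : t < 1)
    (h : x ≤ a + t * x) : x ≤ a / (1 - t) := by
  rw [ENNReal.le_div_iff_mul_le (Or.inl (tsub_pos_of_lt ht).ne')
    (Or.inl (ne_top_of_le_ne_top ENNReal.one_ne_top tsub_le_self)),
    mul_comm, ENNReal.sub_mul fun _ _ => hx, one_mul, tsub_le_iff_right]
  exact h

section

variable {Ω : Type*} [MeasurableSpace Ω] {μ : Measure Ω} {Y : Ω → ℝ} {p K b : ℝ}

theorem lintegral_ofReal_rpow_sub_self [SFinite μ] (hY : Measurable Y) (hYnn : ∀ ω, 0 ≤ Y ω)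
    (hp : 1 < p) :
    ∫⁻ ω, ENNReal.ofReal (Y ω ^ p - Y ω) ∂μ =
      ∫⁻ l in Ioi 1, ENNReal.ofReal ((p - 1) * l ^ (p - 2)) *
        ∫⁻ ω in {ω | l < Y ω}, ENNReal.ofReal (Y ω) ∂μ := by
  set F : Ω → ℝ → ℝ≥0∞ := fun ω l =>
    if l < Y ω then ENNReal.ofReal ((p - 1) * l ^ (p - 2)) * ENNReal.ofReal (Y ω) else 0
  have hF : Measurable (Function.uncurry F) :=
    Measurable.ite (measurableSet_lt measurable_snd (hY.comp measurable_fst)) (by fun_prop)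
      measurable_const
  have integral_in_l : ∀ ω, ∫⁻ l in Ioi 1, F ω l = ENNReal.ofReal (Y ω ^ p - Y ω) := by
    intro ω
    calc ∫⁻ l in Ioi 1, F ω l
        = ∫⁻ l in Ioi 1, (Iio (Y ω)).indicator
            (fun l => ENNReal.ofReal ((p - 1) * l ^ (p - 2)) * ENNReal.ofReal (Y ω)) l := rfl
      _ = ENNReal.ofReal (Y ω ^ (p - 1) - 1) * ENNReal.ofReal (Y ω) := by
        rw [lintegral_indicator measurableSet_Iio, Measure.restrict_restrict measurableSet_Iio,
          Iio_inter_Ioi, lintegral_mul_const' _ _ ENNReal.ofReal_ne_top,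
          lintegral_Ioo_one_ofReal_mul_rpow hp (hYnn ω)]
      _ = ENNReal.ofReal (Y ω ^ p - Y ω) := by
        rw [← ENNReal.ofReal_mul' (hYnn ω), sub_one_mul,
          ← Real.rpow_add_one' (hYnn ω) (by linarith), sub_add_cancel]
  have integral_in_ω : ∀ l, ∫⁻ ω, F ω l ∂μ =
      ENNReal.ofReal ((p - 1) * l ^ (p - 2)) * ∫⁻ ω in {ω | l < Y ω}, ENNReal.ofReal (Y ω) ∂μ := by
    intro l
    calc ∫⁻ ω, F ω l ∂μ
        = ∫⁻ ω, {ω | l < Y ω}.indicator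
            (fun ω => ENNReal.ofReal ((p - 1) * l ^ (p - 2)) * ENNReal.ofReal (Y ω)) ω ∂μ := rfl
      _ = _ := by
        rw [lintegral_indicator (measurableSet_lt measurable_const hY),
          lintegral_const_mul _ hY.ennreal_ofReal]
  calc ∫⁻ ω, ENNReal.ofReal (Y ω ^ p - Y ω) ∂μ = ∫⁻ ω, (∫⁻ l in Ioi 1, F ω l) ∂μ :=
        lintegral_congr fun ω => (integral_in_l ω).symm
    _ = ∫⁻ l in Ioi 1, ∫⁻ ω, F ω l ∂μ := lintegral_lintegral_swap hF.aemeasurable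
    _ = _ := lintegral_congr integral_in_ω

def GoodLambdaBound (μ : Measure Ω) (Y : Ω → ℝ) (K b : ℝ) : Prop :=
  ∀ l : ℝ, 1 < l →
    ∫⁻ ω in {ω | l < Y ω}, ENNReal.ofReal (Y ω) ∂μ ≤ ENNReal.ofReal (K * l) * μ {ω | l ≤ b * Y ω}

theorem GoodLambdaBound.min_const (h : GoodLambdaBound μ Y K b) (hb : 1 ≤ b) (M : ℝ) :
    GoodLambdaBound μ (fun ω => min (Y ω) M) K b := by
  intro l hl
  rcases le_or_gt M l with hMl | hlM
  · have hempty : {ω | l < min (Y ω) M} = ∅ :=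
      eq_empty_of_forall_notMem fun ω hω => (min_le_right _ _).trans hMl |>.not_gt hω
    rw [hempty, Measure.restrict_empty, lintegral_zero_measure]
    exact zero_le
  have hlevel : {ω | l < min (Y ω) M} = {ω | l < Y ω} := by
    ext ω
    simp [hlM]
  have htail : {ω | l ≤ b * Y ω} ⊆ {ω | l ≤ b * min (Y ω) M} := fun ω hω => by
    rw [mem_ofPred_eq, mul_min_of_nonneg _ _ (by linarith)]
    exact le_min hω (by nlinarith)
  calc ∫⁻ ω in {ω | l < min (Y ω) M}, ENNReal.ofReal (min (Y ω) M) ∂μ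
      ≤ ∫⁻ ω in {ω | l < Y ω}, ENNReal.ofReal (Y ω) ∂μ := by
        rw [hlevel]
        exact lintegral_mono fun ω => ENNReal.ofReal_le_ofReal (min_le_left _ _)
    _ ≤ ENNReal.ofReal (K * l) * μ {ω | l ≤ b * Y ω} := h l hl
    _ ≤ ENNReal.ofReal (K * l) * μ {ω | l ≤ b * min (Y ω) M} := by gcongr

theorem GoodLambdaBound.lintegral_rpow_le [SFinite μ] (h : GoodLambdaBound μ Y K b)
    (hY : Measurable Y) (hYnn : ∀ ω, 0 ≤ Y ω) (hb : 0 ≤ b) (hp : 1 < p) :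
    ∫⁻ ω, ENNReal.ofReal (Y ω ^ p) ∂μ ≤
      ∫⁻ ω, ENNReal.ofReal (Y ω) ∂μ +
        ENNReal.ofReal ((p - 1) / p * K * b ^ p) * ∫⁻ ω, ENNReal.ofReal (Y ω ^ p) ∂μ := by
  have hp0 : 0 < p := by linarith
  have pointwise : ∀ l ∈ Ioi (1 : ℝ),
      ENNReal.ofReal ((p - 1) * l ^ (p - 2)) * ∫⁻ ω in {ω | l < Y ω}, ENNReal.ofReal (Y ω) ∂μ ≤
        ENNReal.ofReal ((p - 1) * K) * (μ {ω | l ≤ b * Y ω} * ENNReal.ofReal (l ^ (p - 1))) := by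
    intro l hl
    have hl0 : 0 < l := zero_lt_one.trans hl
    have hpow : l ^ (p - 2) * l = l ^ (p - 1) := by
      rw [← Real.rpow_add_one hl0.ne']
      ring_nf
    calc ENNReal.ofReal ((p - 1) * l ^ (p - 2)) * ∫⁻ ω in {ω | l < Y ω}, ENNReal.ofReal (Y ω) ∂μ
        ≤ ENNReal.ofReal ((p - 1) * l ^ (p - 2)) * (ENNReal.ofReal (K * l) * μ {ω | l ≤ b * Y ω}) :=
          by gcongr; exact h l hl
      _ = ENNReal.ofReal ((p - 1) * K * l ^ (p - 1)) * μ {ω | l ≤ b * Y ω} := by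
        rw [← mul_assoc, ← ENNReal.ofReal_mul
          (mul_nonneg (by linarith) (Real.rpow_nonneg hl0.le _)), ← hpow]
        ring_nf
      _ = _ := by
        rw [ENNReal.ofReal_mul' (Real.rpow_nonneg hl0.le _)]
        ring
  have layer_cake : ENNReal.ofReal (b ^ p) * ∫⁻ ω, ENNReal.ofReal (Y ω ^ p) ∂μ =
      ENNReal.ofReal p * ∫⁻ l in Ioi 0, μ {ω | l ≤ b * Y ω} * ENNReal.ofReal (l ^ (p - 1)) := by
    rw [← lintegral_rpow_eq_lintegral_meas_le_mul μ
      (ae_of_all _ fun ω => mul_nonneg hb (hYnn ω)) (hY.const_mul b).aemeasurable hp0,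
      ← lintegral_const_mul' _ _ ENNReal.ofReal_ne_top]
    congr 1 with ω
    rw [Real.mul_rpow hb (hYnn ω), ENNReal.ofReal_mul (Real.rpow_nonneg hb _)]
  calc ∫⁻ ω, ENNReal.ofReal (Y ω ^ p) ∂μ
      ≤ ∫⁻ ω, ENNReal.ofReal (Y ω) + ENNReal.ofReal (Y ω ^ p - Y ω) ∂μ :=
        lintegral_mono fun ω => by
          simpa only [add_sub_cancel] using ENNReal.ofReal_add_le (p := Y ω) (q := Y ω ^ p - Y ω)
    _ = ∫⁻ ω, ENNReal.ofReal (Y ω) ∂μ + ∫⁻ l in Ioi 1, ENNReal.ofReal ((p - 1) * l ^ (p - 2)) *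
          ∫⁻ ω in {ω | l < Y ω}, ENNReal.ofReal (Y ω) ∂μ := by
        rw [lintegral_add_left hY.ennreal_ofReal, lintegral_ofReal_rpow_sub_self hY hYnn hp]
    _ ≤ ∫⁻ ω, ENNReal.ofReal (Y ω) ∂μ + ENNReal.ofReal ((p - 1) * K) *
          ∫⁻ l in Ioi 0, μ {ω | l ≤ b * Y ω} * ENNReal.ofReal (l ^ (p - 1)) := by
        rw [← lintegral_const_mul' _ _ ENNReal.ofReal_ne_top]
        gcongr _ + ?_
        exact (setLIntegral_mono' measurableSet_Ioi pointwise).trans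
          (lintegral_mono_set (Ioi_subset_Ioi zero_le_one))
    _ = ∫⁻ ω, ENNReal.ofReal (Y ω) ∂μ +
          ENNReal.ofReal ((p - 1) / p * K * b ^ p) * ∫⁻ ω, ENNReal.ofReal (Y ω ^ p) ∂μ := by
        rw [ENNReal.ofReal_mul' (Real.rpow_nonneg hb _), mul_assoc, layer_cake, ← mul_assoc,
          ← ENNReal.ofReal_mul' hp0.le]
        congr 3
        field_simp

theorem lintegral_ofReal_rpow_eq_iSup_min (hY : Measurable Y) (hYnn : ∀ ω, 0 ≤ Y ω)
    (hp : 0 ≤ p) :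
    ∫⁻ ω, ENNReal.ofReal (Y ω ^ p) ∂μ = ⨆ n : ℕ, ∫⁻ ω, ENNReal.ofReal (min (Y ω) n ^ p) ∂μ := by
  have hmin_nonneg : ∀ (n : ℕ) ω, 0 ≤ min (Y ω) n := fun n ω => le_min (hYnn ω) n.cast_nonneg
  have hmono : Monotone fun (n : ℕ) ω => ENNReal.ofReal (min (Y ω) n ^ p) := fun m n hmn ω =>
    ENNReal.ofReal_le_ofReal <| Real.rpow_le_rpow (hmin_nonneg m ω)
      (min_le_min_left _ (Nat.cast_le.2 hmn)) hp
  rw [← lintegral_iSup (fun n => by fun_prop) hmono]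
  congr 1 with ω
  refine le_antisymm (le_iSup_of_le ⌈Y ω⌉₊ ?_) (iSup_le fun n => ?_)
  · rw [min_eq_left (Nat.le_ceil _)]
  · exact ENNReal.ofReal_le_ofReal <| Real.rpow_le_rpow (hmin_nonneg n ω) (min_le_left _ _) hp

theorem GoodLambdaBound.lintegral_rpow_le_of_lt_one [IsFiniteMeasure μ]
    (h : GoodLambdaBound μ Y K b) (hY : Measurable Y) (hYnn : ∀ ω, 0 ≤ Y ω)
    (hYmean : ∫⁻ ω, ENNReal.ofReal (Y ω) ∂μ ≤ 1) (hK : 0 ≤ K) (hb : 1 ≤ b) (hp : 1 < p)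
    (hθ : (p - 1) / p * K * b ^ p < 1) :
    ∫⁻ ω, ENNReal.ofReal (Y ω ^ p) ∂μ ≤ ENNReal.ofReal (1 / (1 - (p - 1) / p * K * b ^ p)) := by
  have hθ0 : 0 ≤ (p - 1) / p * K * b ^ p := by
    have : 0 ≤ p - 1 := by linarith
    positivity
  rw [lintegral_ofReal_rpow_eq_iSup_min hY hYnn (by linarith)]
  refine iSup_le fun n => ?_
  have hmin_nonneg : ∀ ω, 0 ≤ min (Y ω) n := fun ω => le_min (hYnn ω) n.cast_nonneg
  have hfinite : ∫⁻ ω, ENNReal.ofReal (min (Y ω) n ^ p) ∂μ ≠ ∞ :=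
    ((lintegral_mono fun ω => ENNReal.ofReal_le_ofReal <| Real.rpow_le_rpow
      (hmin_nonneg ω) (min_le_right _ _) (by linarith)).trans_lt
      (by simpa using ENNReal.mul_lt_top ENNReal.ofReal_lt_top (measure_lt_top μ univ))).ne
  have hmean : ∫⁻ ω, ENNReal.ofReal (min (Y ω) n) ∂μ ≤ 1 :=
    (lintegral_mono fun ω => ENNReal.ofReal_le_ofReal (min_le_left _ _)).trans hYmean
  have hrec := ((h.min_const hb n).lintegral_rpow_le (by fun_prop) hmin_nonneg
    (by linarith) hp).trans (add_le_add_left hmean _)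
  refine (le_div_one_sub_of_le_add_mul hfinite (ENNReal.ofReal_lt_one.2 hθ) hrec).trans_eq ?_
  rw [ENNReal.ofReal_div_of_pos (by linarith), ENNReal.ofReal_sub _ hθ0, ENNReal.ofReal_one]

end

/-- the good-lambda / Gehring-type integration step producing an `L^p`
bound from a family of distributional inequalities. -/
theorem good_lambda_integration
    {Ω : Type*} {m0 : MeasurableSpace Ω} (P : Measure Ω) [IsProbabilityMeasure P]
    (Y : Ω → ℝ) (hYmeas : Measurable Y) (hYnn : ∀ ω, 0 ≤ Y ω)
    (hYmean : (∫⁻ ω, ENNReal.ofReal (Y ω) ∂P) ≤ 1)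
    (C δ p : ℝ) (hC : 1 ≤ C) (hδ0 : 0 < δ) (hδ1 : δ ≤ 1) (hp : 1 < p)
    (hgood : ∀ l : ℝ, 1 < l →
      (∫⁻ ω in {ω | l < Y ω}, ENNReal.ofReal (Y ω) ∂P) ≤
        ENNReal.ofReal (2 * C * p / (2 * p - 1) * l) * P {ω | δ * l / C ≤ Y ω})
    (θ : ℝ) (hθdef : θ = 2 * C * (p - 1) / (2 * p - 1) * (C / δ) ^ p) (hθ : θ < 1) :
    (∫⁻ ω in {ω | 1 < Y ω}, ENNReal.ofReal (Y ω ^ p) ∂P) ≤ ENNReal.ofReal (2 / (1 - θ)) ∧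
      (∫⁻ ω, ENNReal.ofReal (Y ω ^ p) ∂P) ≤ ENNReal.ofReal (1 + 2 / (1 - θ)) := by
  have hC0 : 0 < C := by linarith
  have hK : 0 ≤ 2 * C * p / (2 * p - 1) := by
    have : 0 < 2 * p - 1 := by linarith
    positivity
  have hθK : θ = (p - 1) / p * (2 * C * p / (2 * p - 1)) * (C / δ) ^ p := by
    rw [hθdef]
    field_simp
  have hgood' : GoodLambdaBound P Y (2 * C * p / (2 * p - 1)) (C / δ) := fun l hl => by
    convert hgood l hl using 4
    ext ω
    rw [div_mul_eq_mul_div, le_div_iff₀ hδ0, div_le_iff₀ hC0, mul_comm δ, mul_comm C]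
  have hE := hgood'.lintegral_rpow_le_of_lt_one hYmeas hYnn hYmean hK
    ((one_le_div hδ0).2 (hδ1.trans hC)) hp (hθK ▸ hθ)
  rw [← hθK] at hE
  have h12 : 1 / (1 - θ) ≤ 2 / (1 - θ) := by gcongr; linarith
  exact ⟨(setLIntegral_le_lintegral _ _).trans (hE.trans (ENNReal.ofReal_le_ofReal h12)),
    hE.trans (ENNReal.ofReal_le_ofReal (by linarith [one_div_nonneg.2 (by linarith : 0 ≤ 1 - θ)]))⟩
end
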